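/- For every n ≥ 4, the multiplicity of the eigenvalue -4 of the n-Queens' graph Q(n) is exactly (n-3)^2. -/

import Mathlib

open Finset

/-- Two squares attack each other: same row, column, diagonal or antidiagonal. -/
abbrev queensRel (n : ℕ) (a b : Fin n × Fin n) : Prop :=
  a.1 = b.1 ∨ a.2 = b.2 ∨ (a.1 : ℤ) - (a.2 : ℤ) = (b.1 : ℤ) - (b.2 : ℤ) ∨
    (a.1 : ℤ) + (a.2 : ℤ) = (b.1 : ℤ) + (b.2 : ℤ)

/-- The n-Queens' graph. -/
def queensGraph (n : ℕ) : SimpleGraph (Fin n × Fin n) := SimpleGraph.fromRel (queensRel n)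

instance (n : ℕ) : DecidableRel (queensGraph n).Adj := fun a b =>
  decidable_of_iff (a ≠ b ∧ (queensRel n a b ∨ queensRel n b a)) Iff.rfl

def IsAdjEigenvalue {V : Type*} [Fintype V] [DecidableEq V] (G : SimpleGraph V)
    [DecidableRel G.Adj] (μ : ℝ) : Prop :=
  ∃ X : V → ℝ, X ≠ 0 ∧ (G.adjMatrix ℝ).mulVec X = μ • X

/-- The 4×4 pattern X₄ (0-indexed). -/
def X4 : Fin 4 × Fin 4 → ℝ := fun p =>
  if (p.1 = 0 ∧ p.2 = 1) ∨ (p.1 = 1 ∧ p.2 = 3) ∨ (p.1 = 2 ∧ p.2 = 0) ∨ (p.1 = 3 ∧ p.2 = 2)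
  then 1
  else if (p.1 = 0 ∧ p.2 = 2) ∨ (p.1 = 1 ∧ p.2 = 0) ∨ (p.1 = 2 ∧ p.2 = 3) ∨ (p.1 = 3 ∧ p.2 = 1)
  then -1 else 0

/-- The translate of `X4` with (0-indexed) upper-left corner `(a,b)`, zero elsewhere. -/
def Xab (n a b : ℕ) : Fin n × Fin n → ℝ := fun p =>
  if h : a ≤ (p.1 : ℕ) ∧ (p.1 : ℕ) ≤ a + 3 ∧ b ≤ (p.2 : ℕ) ∧ (p.2 : ℕ) ≤ b + 3 then
    X4 (⟨(p.1 : ℕ) - a, by omega⟩, ⟨(p.2 : ℕ) - b, by omega⟩)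
  else 0

/-!
Write `S_ℓ X` for the sum of `X` along a queen line `ℓ` (row, column, diagonal or antidiagonal).
Two distinct squares share at most one line, so `((A + 4) X) p` is the sum of `S_ℓ X` over the
four lines through `p`. Pairing with `X` gives `⟪X, (A + 4) X⟫ = ∑ ℓ, (S_ℓ X)²`, hence the
`-4`-eigenspace consists exactly of the `X` all of whose line sums vanish.

Such an `X` is determined by its values on the `(n - 3)²` cells `(a, b + 1)` with `a, b < n - 3`:
every other cell lies on a line whose remaining cells are among these or have been dealt with
earlier, so its value is forced to be `0`. Conversely the translates of the `4 × 4` pattern `X4`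
have vanishing line sums, and at those cells they form a unitriangular system in lexicographic
order, so they are linearly independent.
-/

section FiberSum

variable {V W κ M R : Type*} [Fintype V] [DecidableEq κ]

def fiberSum [AddCommMonoid M] (f : V → κ) (X : V → M) (c : κ) : M := ∑ v with f v = c, X v

theorem fiberSum_eq_of_injective [AddCommMonoid M] [Fintype W] {e : W → V}
    (he : Function.Injective e) {X : V → M} (hX : ∀ v ∉ Set.range e, X v = 0) (f : V → κ)
    (c : κ) : fiberSum f X c = fiberSum (f ∘ e) (X ∘ e) c := by
  simp only [fiberSum, sum_filter]
  exact (Fintype.sum_of_injective e he _ _ (fun v hv => by simp [hX v hv]) fun _ => rfl).symm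

theorem fiberSum_add_const [AddCommMonoid M] [AddCommGroup κ] (f : V → κ) (X : V → M)
    (t c : κ) : fiberSum (fun v => f v + t) X c = fiberSum f X (c - t) := by
  simp only [fiberSum, eq_sub_iff_add_eq]

theorem eq_zero_of_fiberSum_eq_zero [AddCommMonoid M] {f : V → κ} {X : V → M} {v : V}
    (hsum : fiberSum f X (f v) = 0) (hother : ∀ w, f w = f v → w ≠ v → X w = 0) : X v = 0 := by
  rwa [fiberSum, sum_eq_single_of_mem v (by simp)
    fun w hw hne => hother w (mem_filter.1 hw).2 hne] at hsum

theorem sum_mul_fiberSum [CommSemiring R] (f : V → κ) (X : V → R) :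
    ∑ v, X v * fiberSum f X (f v) = ∑ c ∈ univ.image f, fiberSum f X c ^ 2 := by
  rw [← sum_fiberwise_of_maps_to fun v _ => mem_image_of_mem f (mem_univ v)]
  refine sum_congr rfl fun c _ => ?_
  rw [sq, fiberSum, sum_mul]
  exact sum_congr rfl fun v hv => by rw [(mem_filter.1 hv).2, fiberSum]

theorem fiberSum_eq_zero_of_forall_sum_eq_zero [CommRing R] [LinearOrder R]
    [IsStrictOrderedRing R] {ι : Type*} [Fintype ι] (f : ι → V → κ) (X : V → R)
    (h : ∀ v, ∑ i, fiberSum (f i) X (f i v) = 0) (i : ι) (c : κ) : fiberSum (f i) X c = 0 := by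
  have hsq : ∑ i, ∑ c ∈ univ.image (f i), fiberSum (f i) X c ^ 2 = 0 := by
    simp_rw [← sum_mul_fiberSum]
    rw [sum_comm]
    simp [← mul_sum, h]
  by_cases hc : c ∈ univ.image (f i)
  · have hi := (sum_eq_zero_iff_of_nonneg fun j _ => sum_nonneg fun c _ => sq_nonneg _).1 hsq i
      (mem_univ i)
    exact pow_eq_zero_iff two_ne_zero |>.1 <|
      (sum_eq_zero_iff_of_nonneg fun c _ => sq_nonneg _).1 hi c hc
  · refine sum_eq_zero fun v hv => absurd ?_ hc
    exact mem_image.2 ⟨v, mem_univ v, (mem_filter.1 hv).2⟩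

theorem eq_zero_of_peeling [AddCommMonoid M] {ι : Type*} (f : ι → V → κ) {X : V → M}
    (hX : ∀ i c, fiberSum (f i) X c = 0) (S : Set V) (hS : ∀ v ∈ S, X v = 0) (r : V → ℕ)
    (hr : ∀ v ∉ S, ∃ i, ∀ w, f i w = f i v → w ≠ v → w ∈ S ∨ r w < r v) : X = 0 := by
  funext v
  induction hv : r v using Nat.strong_induction_on generalizing v with
  | _ m ih =>
    by_cases hvS : v ∈ S
    · exact hS v hvS
    obtain ⟨i, hi⟩ := hr v hvS
    refine eq_zero_of_fiberSum_eq_zero (hX i _) fun w hw hne => ?_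
    rcases hi w hw hne with hwS | hlt
    · exact hS w hwS
    · exact ih _ (hv ▸ hlt) w rfl

end FiberSum

theorem linearIndependent_of_triangular {ι V R : Type*} [Ring R] [NoZeroDivisors R] [Fintype ι]
    [LinearOrder ι] (v : ι → V → R) (x : ι → V) (hdiag : ∀ i, v i (x i) ≠ 0)
    (htri : ∀ i j, i < j → v j (x i) = 0) : LinearIndependent R v := by
  rw [Fintype.linearIndependent_iff]
  intro g hg i
  induction i using WellFoundedLT.induction with
  | _ i ih =>
    have h := congrFun hg (x i)
    simp only [Finset.sum_apply, Pi.smul_apply, smul_eq_mul, Pi.zero_apply] at h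
    rw [sum_eq_single i (fun j _ hji => ?_) (by simp)] at h
    · exact (mul_eq_zero.1 h).resolve_right (hdiag i)
    · rcases hji.lt_or_gt with hlt | hgt
      · rw [ih j hlt, zero_mul]
      · rw [htri i j hgt, mul_zero]

open Matrix

def queensLine : Fin 4 → ℤ × ℤ →+ ℤ :=
  ![AddMonoidHom.fst ℤ ℤ, AddMonoidHom.snd ℤ ℤ, AddMonoidHom.fst ℤ ℤ - AddMonoidHom.snd ℤ ℤ,
    AddMonoidHom.fst ℤ ℤ + AddMonoidHom.snd ℤ ℤ]

@[simp] theorem queensLine_zero (u : ℤ × ℤ) : queensLine 0 u = u.1 := rfl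
@[simp] theorem queensLine_one (u : ℤ × ℤ) : queensLine 1 u = u.2 := rfl
@[simp] theorem queensLine_two (u : ℤ × ℤ) : queensLine 2 u = u.1 - u.2 := rfl
@[simp] theorem queensLine_three (u : ℤ × ℤ) : queensLine 3 u = u.1 + u.2 := rfl

theorem eq_of_queensLine_eq {u v : ℤ × ℤ} (huv : u ≠ v) {k l : Fin 4}
    (hk : queensLine k u = queensLine k v) (hl : queensLine l u = queensLine l v) : k = l := by
  obtain ⟨a, b⟩ := u
  obtain ⟨c, d⟩ := v
  simp only [ne_eq, Prod.mk.injEq] at huv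
  fin_cases k <;> fin_cases l <;> simp at hk hl ⊢ <;> omega

theorem sum_ite_queensLine_eq {M : Type*} [AddCommMonoid M] {u v : ℤ × ℤ} (huv : u ≠ v) (x : M) :
    (∑ k, if queensLine k u = queensLine k v then x else 0) =
      if ∃ k, queensLine k u = queensLine k v then x else 0 := by
  split_ifs with h
  · obtain ⟨k₀, hk₀⟩ := h
    rw [sum_eq_single k₀ (fun k _ hk => if_neg fun h => hk (eq_of_queensLine_eq huv h hk₀))
      (by simp), if_pos hk₀]
  · exact sum_eq_zero fun k _ => if_neg fun hk => h ⟨k, hk⟩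

def cellCoord {n : ℕ} (p : Fin n × Fin n) : ℤ × ℤ := (p.1, p.2)

theorem cellCoord_injective (n : ℕ) : Function.Injective (cellCoord (n := n)) := by
  intro p q h
  simp only [cellCoord, Prod.mk.injEq, Nat.cast_inj, Fin.val_inj] at h
  exact Prod.ext h.1 h.2

def boardLine (n : ℕ) (k : Fin 4) (p : Fin n × Fin n) : ℤ := queensLine k (cellCoord p)

theorem queensGraph_adj_iff {n : ℕ} {p q : Fin n × Fin n} :
    (queensGraph n).Adj p q ↔ p ≠ q ∧ ∃ k, boardLine n k p = boardLine n k q := by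
  simp [queensGraph, queensRel, Fin.exists_fin_succ, boardLine, cellCoord, Fin.ext_iff]
  omega

theorem sum_ite_boardLine_eq {n : ℕ} (p q : Fin n × Fin n) (x : ℝ) :
    (∑ k, if boardLine n k q = boardLine n k p then x else 0) =
      (if (queensGraph n).Adj p q then x else 0) + if q = p then 4 * x else 0 := by
  rcases eq_or_ne q p with rfl | hqp
  · simp
  · simp only [queensGraph_adj_iff, if_neg hqp, add_zero]
    exact (sum_ite_queensLine_eq ((cellCoord_injective n).ne hqp) x).trans
      (by simp [hqp.symm, boardLine, eq_comm])

theorem adjMatrix_mulVec_add_four_mul {n : ℕ} (X : Fin n × Fin n → ℝ) (p : Fin n × Fin n) :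
    ((queensGraph n).adjMatrix ℝ *ᵥ X) p + 4 * X p =
      ∑ k, fiberSum (boardLine n k) X (boardLine n k p) := by
  simp only [fiberSum, sum_filter]
  rw [sum_comm]
  simp only [sum_ite_boardLine_eq, sum_add_distrib, sum_ite_eq', mem_univ,
    if_true, SimpleGraph.adjMatrix_mulVec_apply, SimpleGraph.neighborFinset_eq_filter,
    sum_filter]

theorem mem_eigenspace_neg_four_iff {n : ℕ} {X : Fin n × Fin n → ℝ} :
    X ∈ Module.End.eigenspace (toLin' ((queensGraph n).adjMatrix ℝ)) (-4) ↔
      ∀ k c, fiberSum (boardLine n k) X c = 0 := by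
  rw [Module.End.mem_eigenspace_iff, toLin'_apply, funext_iff]
  refine ⟨fun h => fiberSum_eq_zero_of_forall_sum_eq_zero _ X fun p => ?_, fun h p => ?_⟩
  · rw [← adjMatrix_mulVec_add_four_mul, h p]
    simp
  · have := adjMatrix_mulVec_add_four_mul X p
    simp only [h, sum_const_zero] at this
    rw [Pi.smul_apply, smul_eq_mul]
    linarith

def freeCell (n : ℕ) (q : Fin (n - 3) × Fin (n - 3)) : Fin n × Fin n :=
  (⟨q.1, by omega⟩, ⟨q.2 + 1, by omega⟩)

theorem mem_range_freeCell_iff {n : ℕ} {p : Fin n × Fin n} :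
    p ∈ Set.range (freeCell n) ↔ (p.1 : ℕ) + 4 ≤ n ∧ 1 ≤ (p.2 : ℕ) ∧ (p.2 : ℕ) + 3 ≤ n := by
  constructor
  · rintro ⟨q, rfl⟩
    simp only [freeCell]
    omega
  · intro h
    exact ⟨(⟨p.1, by omega⟩, ⟨p.2 - 1, by omega⟩),
      Prod.ext rfl (Fin.ext (by simp [freeCell]; omega))⟩

/-- The order in which the cells outside `freeCell` are forced to vanish. -/
def peelRank {n : ℕ} (p : Fin n × Fin n) : ℕ :=
  2 * min (p.1 : ℕ) p.2 + if max (p.1 : ℕ) p.2 = n - 2 then 1 else 0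

theorem exists_peeling_boardLine {n : ℕ} {p : Fin n × Fin n} (hp : p ∉ Set.range (freeCell n)) :
    ∃ k, ∀ q, boardLine n k q = boardLine n k p → q ≠ p →
      q ∈ Set.range (freeCell n) ∨ peelRank q < peelRank p := by
  simp only [mem_range_freeCell_iff, peelRank, Ne, Prod.ext_iff, Fin.ext_iff] at hp ⊢
  by_cases hdiag : max (p.1 : ℕ) p.2 = n - 1
  · refine ⟨2, fun q hq hne => ?_⟩
    simp only [boardLine, cellCoord, queensLine_two] at hq
    split_ifs <;> omega
  by_cases hcol : (p.1 : ℕ) = n - 2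
  · refine ⟨1, fun q hq hne => ?_⟩
    simp only [boardLine, cellCoord, queensLine_one, Nat.cast_inj] at hq
    split_ifs <;> omega
  by_cases hrow : (p.2 : ℕ) = n - 2
  · refine ⟨0, fun q hq hne => ?_⟩
    simp only [boardLine, cellCoord, queensLine_zero, Nat.cast_inj] at hq
    split_ifs <;> omega
  · refine ⟨3, fun q hq hne => ?_⟩
    simp only [boardLine, cellCoord, queensLine_three] at hq
    split_ifs <;> omega

theorem eq_zero_of_comp_freeCell_eq_zero {n : ℕ} {X : Fin n × Fin n → ℝ}
    (hX : ∀ k c, fiberSum (boardLine n k) X c = 0) (h : X ∘ freeCell n = 0) : X = 0 :=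
  eq_zero_of_peeling (boardLine n) hX _ (by rintro _ ⟨q, rfl⟩; exact congrFun h q) peelRank
    fun _ hp => exists_peeling_boardLine hp

theorem fiberSum_boardLine_X4 (k : Fin 4) (c : ℤ) : fiberSum (boardLine 4 k) X4 c = 0 := by
  simp only [fiberSum, sum_filter, Fintype.sum_prod_type, Fin.sum_univ_four]
  fin_cases k <;> simp [boardLine, cellCoord, X4] <;> split_ifs <;> norm_num

def shiftCell {n a b : ℕ} (ha : a + 3 < n) (hb : b + 3 < n) (q : Fin 4 × Fin 4) : Fin n × Fin n :=
  (⟨a + q.1, by omega⟩, ⟨b + q.2, by omega⟩)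

theorem shiftCell_injective {n a b : ℕ} (ha : a + 3 < n) (hb : b + 3 < n) :
    Function.Injective (shiftCell ha hb) := by
  intro q r h
  simp only [shiftCell, Prod.mk.injEq, Fin.mk.injEq, add_right_inj, Fin.val_inj] at h
  exact Prod.ext h.1 h.2

theorem boardLine_shiftCell {n a b : ℕ} (ha : a + 3 < n) (hb : b + 3 < n) (k : Fin 4)
    (q : Fin 4 × Fin 4) :
    boardLine n k (shiftCell ha hb q) = boardLine 4 k q + queensLine k (a, b) := by
  rw [boardLine, boardLine, ← map_add]
  simp only [shiftCell, cellCoord, Prod.mk_add_mk, Nat.cast_add]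
  ring_nf

theorem Xab_shiftCell {n a b : ℕ} (ha : a + 3 < n) (hb : b + 3 < n) (q : Fin 4 × Fin 4) :
    Xab n a b (shiftCell ha hb q) = X4 q := by
  rw [Xab, dif_pos (by simp only [shiftCell]; omega)]
  congr <;> simp [shiftCell]

theorem Xab_eq_zero_of_not_mem_range {n a b : ℕ} (ha : a + 3 < n) (hb : b + 3 < n)
    {p : Fin n × Fin n} (hp : p ∉ Set.range (shiftCell ha hb)) : Xab n a b p = 0 := by
  refine dif_neg fun h => hp ⟨(⟨p.1 - a, by omega⟩, ⟨p.2 - b, by omega⟩), ?_⟩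
  ext <;> simp only [shiftCell] <;> omega

theorem Xab_mem_eigenspace {n a b : ℕ} (ha : a + 3 < n) (hb : b + 3 < n) :
    Xab n a b ∈ Module.End.eigenspace (toLin' ((queensGraph n).adjMatrix ℝ)) (-4) := by
  refine mem_eigenspace_neg_four_iff.2 fun k c => ?_
  rw [fiberSum_eq_of_injective (shiftCell_injective ha hb)
    (fun p hp => Xab_eq_zero_of_not_mem_range ha hb hp)]
  simp only [Function.comp_def, boardLine_shiftCell, Xab_shiftCell]
  rw [fiberSum_add_const, fiberSum_boardLine_X4]

theorem Xab_freeCell_self {n : ℕ} (q : Fin (n - 3) × Fin (n - 3)) :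
    Xab n q.1 q.2 (freeCell n q) = 1 := by
  rw [Xab, dif_pos (by simp only [freeCell]; omega)]
  simp [freeCell, X4]

theorem Xab_freeCell_of_lt {n : ℕ} {q r : Fin (n - 3) × Fin (n - 3)} (h : toLex q < toLex r) :
    Xab n r.1 r.2 (freeCell n q) = 0 := by
  rw [Prod.Lex.toLex_lt_toLex, Fin.lt_def, Fin.lt_def] at h
  unfold Xab
  split_ifs with hwin
  · have hrow : (freeCell n q).1.val - r.1 = 0 := by simp only [freeCell] at hwin ⊢; omega
    have hcol : (freeCell n q).2.val - r.2 = 0 := by simp only [freeCell] at hwin ⊢; omega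
    simp [hrow, hcol, X4]
  · rfl

theorem linearIndependent_Xab (n : ℕ) :
    LinearIndependent ℝ fun r : Lex (Fin (n - 3) × Fin (n - 3)) => Xab n (ofLex r).1 (ofLex r).2 :=
  linearIndependent_of_triangular _ (fun r => freeCell n (ofLex r))
    (fun r => by simp [Xab_freeCell_self]) fun _ _ h => Xab_freeCell_of_lt h

theorem queens_neg_four_multiplicity_general (n : ℕ) :
    Module.finrank ℝ
        (Module.End.eigenspace (Matrix.toLin' ((queensGraph n).adjMatrix ℝ)) (-4)) =
      (n - 3) ^ 2 := by
  set E := Module.End.eigenspace (toLin' ((queensGraph n).adjMatrix ℝ)) (-4)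
  apply le_antisymm
  · let restrict : E →ₗ[ℝ] Fin (n - 3) × Fin (n - 3) → ℝ :=
      (LinearMap.funLeft ℝ ℝ (freeCell n)).comp E.subtype
    have hinj : Function.Injective restrict := by
      rw [← LinearMap.ker_eq_bot, LinearMap.ker_eq_bot']
      intro X hX
      exact Subtype.ext (eq_zero_of_comp_freeCell_eq_zero (mem_eigenspace_neg_four_iff.1 X.2) hX)
    simpa [sq] using LinearMap.finrank_le_finrank_of_injective hinj
  · have hspan : Submodule.span ℝ (Set.range fun r : Lex (Fin (n - 3) × Fin (n - 3)) =>
        Xab n (ofLex r).1 (ofLex r).2) ≤ E := Submodule.span_le.2 <| by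
      rintro _ ⟨r, rfl⟩
      exact Xab_mem_eigenspace (by omega) (by omega)
    simpa [finrank_span_eq_card (linearIndependent_Xab n), sq] using Submodule.finrank_mono hspan

/-- the multiplicity of the eigenvalue `-4` of `Q(n)` is `(n-3)²`. -/
theorem queens_neg_four_multiplicity (n : ℕ) (h : 4 ≤ n) :
    Module.finrank ℝ
        (Module.End.eigenspace (Matrix.toLin' ((queensGraph n).adjMatrix ℝ)) (-4)) =
      (n - 3) ^ 2 :=
  queens_neg_four_multiplicity_general n
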